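/- Let p ≥ 1 and q ≥ 0 be integers. Then Σ_{n=1}^∞ H_n^{(p,q)} / (n·C(n+q, q)) = ζ(p+1); in particular the value of the series does not depend on q. -/
import Mathlib


open Finset Real

/-- The generalized harmonic number `H_n^{(p)} = ∑_{k=1}^n 1/k^p`. -/
noncomputable def gH (p : ℤ) (n : ℕ) : ℝ := ∑ k ∈ Finset.Icc 1 n, ((k : ℝ) ^ p)⁻¹

/-- The generalized hyperharmonic number `H_n^{(p,q)}`:
`H_n^{(p,0)} = 1/n^p` (with `H_0^{(p,q)} = 0`) and
`H_n^{(p,q)} = ∑_{k=1}^n H_k^{(p,q-1)}` for `q ≥ 1`. -/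
noncomputable def gHH (p : ℤ) : ℕ → ℕ → ℝ
  | 0, n => if n = 0 then 0 else ((n : ℝ) ^ p)⁻¹
  | q + 1, n => ∑ k ∈ Finset.Icc 1 n, gHH p q k

/-- Euler sum of generalized harmonic numbers `ζ_{H^{(p)}}(r) = ∑_{n≥1} H_n^{(p)}/n^r`. -/
noncomputable def eulerSum (p r : ℤ) : ℝ := ∑' n : ℕ+, gH p n / (n : ℝ) ^ r

/-- Euler sum of generalized hyperharmonic numbers
`ζ_{H^{(p,q)}}(r) = ∑_{n≥1} H_n^{(p,q)}/n^r`. -/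
noncomputable def eulerSumHH (p : ℤ) (q : ℕ) (r : ℤ) : ℝ := ∑' n : ℕ+, gHH p q n / (n : ℝ) ^ r

/-- Riemann zeta value at an integer argument, `ζ(s) = ∑_{n≥1} 1/n^s`. -/
noncomputable def zv (s : ℤ) : ℝ := ∑' n : ℕ+, ((n : ℝ) ^ s)⁻¹

/-- Unsigned Stirling numbers of the first kind, defined by
`x(x+1)⋯(x+q-1) = ∑_{k=0}^q [q,k] x^k`, i.e. `[n+1,k] = [n,k-1] + n·[n,k]`. -/
def stirlingFirst : ℕ → ℕ → ℕ
  | 0, 0 => 1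
  | 0, _ + 1 => 0
  | _ + 1, 0 => 0
  | n + 1, k + 1 => stirlingFirst n k + n * stirlingFirst n (k + 1)

/-- The series `μ(r,j) = ∑_{n≥1} 1/(n^r (n+j))`. -/
noncomputable def mu (r j : ℕ) : ℝ := ∑' n : ℕ+, 1 / ((n : ℝ) ^ r * ((n : ℝ) + j))

/-- `e_j(n+1, n+2, …, n+q)`: the `j`-th elementary symmetric polynomial
evaluated at the numbers `n+1, …, n+q`. -/
noncomputable def esymmVal (n q j : ℕ) : ℝ :=
  ∑ s ∈ Finset.powersetCard j (Finset.Icc 1 q), ∏ i ∈ s, ((n : ℝ) + i)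

/-! ### Auxiliary lemmas -/

private lemma gHH_zero' (p : ℤ) (q : ℕ) : gHH p q 0 = 0 := by
  cases q <;> simp [gHH]

private lemma gHH_succ (p : ℤ) (q n : ℕ) :
    gHH p (q + 1) n = ∑ k ∈ Finset.Icc 1 n, gHH p q k := rfl

private lemma gHH_nonneg (p : ℤ) (q : ℕ) : ∀ n : ℕ, 0 ≤ gHH p q n := by
  induction q with
  | zero =>
    intro n
    unfold gHH
    split
    · exact le_refl 0
    · exact inv_nonneg.mpr (zpow_nonneg (Nat.cast_nonneg n) p)
  | succ q ih =>
    intro n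
    rw [gHH_succ]
    exact Finset.sum_nonneg fun k _ => ih k

private lemma gHH_step (p : ℤ) (q N : ℕ) :
    gHH p (q + 1) (N + 1) = gHH p (q + 1) N + gHH p q (N + 1) := by
  rw [gHH_succ, gHH_succ, Finset.sum_Icc_succ_top (by omega)]

/-- Partial sums of the series in question. -/
noncomputable def Fps (p : ℤ) (q N : ℕ) : ℝ :=
  ∑ n ∈ Finset.Icc 1 N, gHH p q n / ((n : ℝ) * (((n + q).choose q : ℕ) : ℝ))

private lemma Fps_succ (p : ℤ) (q N : ℕ) :
    Fps p q (N + 1) = Fps p q N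
      + gHH p q (N + 1) / (((N : ℝ) + 1) * (((N + 1 + q).choose q : ℕ) : ℝ)) := by
  rw [Fps, Finset.sum_Icc_succ_top (by omega)]
  push_cast
  rfl

private lemma F_rec (p : ℤ) (q : ℕ) : ∀ N : ℕ,
    Fps p (q + 1) N
      + gHH p (q + 1) N / (((q : ℝ) + 1) * (((N + q + 1).choose (q + 1) : ℕ) : ℝ))
      = Fps p q N := by
  intro N
  induction N with
  | zero => simp [Fps, gHH_succ]
  | succ N ih =>
    have hc1p : 0 < (N + q + 2).choose (q + 1) := Nat.choose_pos (by omega)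
    have hc2p : 0 < (N + q + 1).choose (q + 1) := Nat.choose_pos (by omega)
    have hc3p : 0 < (N + q + 1).choose q := Nat.choose_pos (by omega)
    have hc1 : (0 : ℝ) < ((N + q + 2).choose (q + 1) : ℝ) := by exact_mod_cast hc1p
    have hc2 : (0 : ℝ) < ((N + q + 1).choose (q + 1) : ℝ) := by exact_mod_cast hc2p
    have hc3 : (0 : ℝ) < ((N + q + 1).choose q : ℝ) := by exact_mod_cast hc3p
    have hA : ((N : ℝ) + q + 2) * ((N + q + 1).choose q : ℝ)
        = ((q : ℝ) + 1) * ((N + q + 2).choose (q + 1) : ℝ) := by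
      have h' : (N + q + 2) * (N + q + 1).choose q
          = (q + 1) * (N + q + 2).choose (q + 1) := by
        have := Nat.add_one_mul_choose_eq (N + q + 1) q
        simp only [Nat.succ_eq_add_one, show N + q + 1 + 1 = N + q + 2 from by omega,
          mul_comm] at this
        linarith [this]
      exact_mod_cast h'
    have hC : ((q : ℝ) + 1) * ((N + q + 1).choose (q + 1) : ℝ)
        = ((N : ℝ) + 1) * ((N + q + 1).choose q : ℝ) := by
      have h' : (q + 1) * (N + q + 1).choose (q + 1)
          = (N + 1) * (N + q + 1).choose q := by
        have := Nat.choose_succ_right_eq (N + q + 1) q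
        have h2 : N + q + 1 - q = N + 1 := by omega
        rw [h2] at this
        simpa [mul_comm] using this
      exact_mod_cast h'
    have hq : (0 : ℝ) < (q : ℝ) + 1 := by positivity
    have hN : (0 : ℝ) < (N : ℝ) + 1 := by positivity
    rw [Fps_succ, Fps_succ, gHH_step]
    simp only [show N + 1 + (q + 1) = N + q + 2 from by omega,
      show N + 1 + q + 1 = N + q + 2 from by omega,
      show N + 1 + q = N + q + 1 from by omega]
    rw [← ih]
    have e1 : ((N + q + 2).choose (q + 1) : ℝ)
        = ((N : ℝ) + q + 2) * ((N + q + 1).choose q : ℝ) / ((q : ℝ) + 1) := by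
      field_simp
      linarith [hA]
    have e2 : ((N + q + 1).choose (q + 1) : ℝ)
        = ((N : ℝ) + 1) * ((N + q + 1).choose q : ℝ) / ((q : ℝ) + 1) := by
      field_simp
      linarith [hC]
    rw [e1, e2]
    have hNq : (0 : ℝ) < (N : ℝ) + q + 2 := by positivity
    field_simp [hN.ne', hq.ne', hc3.ne', hNq.ne']
    ring

private lemma gH_nonneg (p : ℤ) (n : ℕ) : 0 ≤ gH p n :=
  Finset.sum_nonneg fun k _ => inv_nonneg.mpr (zpow_nonneg (Nat.cast_nonneg k) p)

private lemma gH_mono (p : ℤ) {m n : ℕ} (h : m ≤ n) : gH p m ≤ gH p n :=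
  Finset.sum_le_sum_of_subset_of_nonneg (Finset.Icc_subset_Icc_right h)
    fun k _ _ => inv_nonneg.mpr (zpow_nonneg (Nat.cast_nonneg k) p)

private lemma gHH_one (p : ℤ) (n : ℕ) : gHH p 1 n = gH p n := by
  rw [gHH_succ, gH]
  refine Finset.sum_congr rfl fun k hk => ?_
  have hk1 : k ≠ 0 := by
    rcases Finset.mem_Icc.mp hk with ⟨h1, _⟩; omega
  simp [gHH, hk1]

private lemma sum_choose_le (q n : ℕ) :
    ∑ k ∈ Finset.Icc 1 n, (k + q).choose q ≤ (n + q + 1).choose (q + 1) := by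
  have h1 : ∑ k ∈ Finset.Icc 1 n, (k + q).choose q
      = ∑ m ∈ Finset.Icc (1 + q) (n + q), m.choose q := by
    rw [← Finset.map_add_right_Icc]
    rw [Finset.sum_map]
    rfl
  rw [h1]
  calc ∑ m ∈ Finset.Icc (1 + q) (n + q), m.choose q
      ≤ ∑ m ∈ Finset.Icc q (n + q), m.choose q :=
        Finset.sum_le_sum_of_subset (Finset.Icc_subset_Icc_left (by omega))
    _ = (n + q + 1).choose (q + 1) := Nat.sum_Icc_choose (n + q) q

private lemma gHH_le (p : ℤ) (q : ℕ) : ∀ n : ℕ,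
    gHH p (q + 1) n ≤ (((n + q).choose q : ℕ) : ℝ) * gH p n := by
  induction q with
  | zero => intro n; simp [gHH_one]
  | succ q ih =>
    intro n
    rw [gHH_succ]
    calc ∑ k ∈ Finset.Icc 1 n, gHH p (q + 1) k
        ≤ ∑ k ∈ Finset.Icc 1 n, (((k + q).choose q : ℕ) : ℝ) * gH p n := by
          refine Finset.sum_le_sum fun k hk => ?_
          refine (ih k).trans ?_
          exact mul_le_mul_of_nonneg_left (gH_mono p (Finset.mem_Icc.mp hk).2)
            (Nat.cast_nonneg _)
      _ = ((∑ k ∈ Finset.Icc 1 n, (k + q).choose q : ℕ) : ℝ) * gH p n := by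
          rw [← Finset.sum_mul]; push_cast; ring
      _ ≤ (((n + q + 1).choose (q + 1) : ℕ) : ℝ) * gH p n := by
          refine mul_le_mul_of_nonneg_right ?_ (gH_nonneg p n)
          exact_mod_cast sum_choose_le q n

private lemma gH_le_one_add_log {p : ℤ} (hp : 1 ≤ p) (n : ℕ) :
    gH p n ≤ 1 + Real.log n := by
  have h1 : gH p n ≤ gH 1 n := by
    refine Finset.sum_le_sum fun k hk => ?_
    have hk1 : (1 : ℝ) ≤ (k : ℝ) := by
      have := (Finset.mem_Icc.mp hk).1; exact_mod_cast this
    have h2 : (k : ℝ) ^ (1 : ℤ) ≤ (k : ℝ) ^ p := zpow_le_zpow_right₀ hk1 hp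
    have h3 : (0 : ℝ) < (k : ℝ) ^ (1 : ℤ) := by
      rw [zpow_one]; linarith
    exact inv_anti₀ h3 h2
  have h2 : gH 1 n = (harmonic n : ℝ) := by
    rw [gH, harmonic_eq_sum_Icc]
    push_cast
    refine Finset.sum_congr rfl fun k _ => by rw [zpow_one]
  calc gH p n ≤ gH 1 n := h1
    _ = (harmonic n : ℝ) := h2
    _ ≤ 1 + Real.log n := harmonic_le_one_add_log n

open Filter in
private lemma tendsto_rem {p : ℤ} (hp : 1 ≤ p) (q : ℕ) :
    Tendsto (fun N : ℕ =>
        gHH p (q + 1) N / (((q : ℝ) + 1) * (((N + q + 1).choose (q + 1) : ℕ) : ℝ)))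
      atTop (nhds 0) := by
  have hub : Tendsto (fun N : ℕ => 1 / (N : ℝ) + Real.log N / (N : ℝ)) atTop (nhds 0) := by
    have h1 : Tendsto (fun N : ℕ => 1 / (N : ℝ)) atTop (nhds 0) :=
      tendsto_one_div_atTop_nhds_zero_nat
    have h2 : Tendsto (fun N : ℕ => Real.log N / (N : ℝ)) atTop (nhds 0) := by
      have := Real.isLittleO_log_id_atTop.tendsto_div_nhds_zero
      exact this.comp tendsto_natCast_atTop_atTop
    simpa using h1.add h2
  refine squeeze_zero' ?_ ?_ hub
  · filter_upwards with N
    refine div_nonneg (gHH_nonneg p (q + 1) N) ?_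
    positivity
  · filter_upwards [eventually_ge_atTop 1] with N hN1
    have hNpos : (0 : ℝ) < (N : ℝ) := by exact_mod_cast hN1
    have hcp : 0 < (N + q).choose q := Nat.choose_pos (by omega)
    have hc : (0 : ℝ) < ((N + q).choose q : ℝ) := by exact_mod_cast hcp
    have hD : ((q : ℝ) + 1) * (((N + q + 1).choose (q + 1) : ℕ) : ℝ)
        = ((N : ℝ) + q + 1) * ((N + q).choose q : ℝ) := by
      have h' : (N + q + 1) * (N + q).choose q
          = (N + q + 1).choose (q + 1) * (q + 1) := by
        have := Nat.add_one_mul_choose_eq (N + q) q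
        simpa [Nat.succ_eq_add_one, show N + q + 1 = N + q + 1 from rfl] using this
      have := congrArg (Nat.cast (R := ℝ)) h'
      push_cast at this
      linarith [this]
    rw [hD]
    have hNq1 : (0 : ℝ) < (N : ℝ) + q + 1 := by positivity
    calc gHH p (q + 1) N / (((N : ℝ) + q + 1) * ((N + q).choose q : ℝ))
        ≤ (((N + q).choose q : ℝ) * gH p N) / (((N : ℝ) + q + 1) * ((N + q).choose q : ℝ)) := by
          gcongr
          exact gHH_le p q N
      _ = gH p N / ((N : ℝ) + q + 1) := by
          rw [mul_comm (((N : ℝ) + q + 1)) _, mul_div_mul_left _ _ hc.ne']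
      _ ≤ (1 + Real.log N) / (N : ℝ) := by
          apply div_le_div₀ (by positivity) (gH_le_one_add_log hp N) hNpos (by linarith)
      _ = 1 / (N : ℝ) + Real.log N / (N : ℝ) := by rw [add_div, one_div]

private lemma sum_range_eq_Icc {g : ℕ → ℝ} (h0 : g 0 = 0) (N : ℕ) :
    ∑ i ∈ Finset.range (N + 1), g i = ∑ i ∈ Finset.Icc 1 N, g i := by
  induction N with
  | zero => simp [h0]
  | succ N ih => rw [Finset.sum_range_succ, ih, Finset.sum_Icc_succ_top (by omega)]

open Filter in
private lemma tendsto_Fps (p : ℕ) (hp : 1 ≤ p) (q : ℕ) :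
    Tendsto (fun N : ℕ => Fps (p : ℤ) q N) atTop (nhds (zv ((p : ℤ) + 1))) := by
  induction q with
  | zero =>
    set g : ℕ → ℝ := fun n => ((n : ℝ) ^ ((p : ℤ) + 1))⁻¹ with hgdef
    have hg0 : g 0 = 0 := by
      simp only [hgdef, Nat.cast_zero]
      rw [zero_zpow _ (by omega)]
      simp
    have hgs : Summable g := by
      have he : g = fun n : ℕ => ((n : ℝ) ^ (p + 1 : ℕ))⁻¹ := by
        funext n
        rw [hgdef, ← zpow_natCast]
        push_cast
        ring_nf
      rw [he]
      exact Real.summable_nat_pow_inv.mpr (by omega)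
    have hinj : Function.Injective (fun n : ℕ+ => (n : ℕ)) := PNat.coe_injective
    have hrange : ∀ x ∉ Set.range (fun n : ℕ+ => (n : ℕ)), g x = 0 := by
      intro x hx
      have hx0 : x = 0 := by
        by_contra h
        exact hx ⟨⟨x, Nat.pos_of_ne_zero h⟩, rfl⟩
      rw [hx0]; exact hg0
    have hgs' : Summable (g ∘ fun n : ℕ+ => (n : ℕ)) :=
      (hinj.summable_iff hrange).mpr hgs
    have hzv : HasSum (fun n : ℕ+ => g n) (zv ((p : ℤ) + 1)) := hgs'.hasSum
    have hgz : HasSum g (zv ((p : ℤ) + 1)) := (hinj.hasSum_iff hrange).mp hzv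
    have ht : Filter.Tendsto (fun N : ℕ => ∑ i ∈ Finset.range N, g i) Filter.atTop
        (nhds (zv ((p : ℤ) + 1))) := hgz.tendsto_sum_nat
    have ht' : Tendsto (fun N : ℕ => ∑ i ∈ Finset.range (N + 1), g i) atTop
        (nhds (zv ((p : ℤ) + 1))) := ht.comp (tendsto_add_atTop_nat 1)
    refine ht'.congr fun N => ?_
    rw [sum_range_eq_Icc hg0 N, Fps]
    refine Finset.sum_congr rfl fun n hn => ?_
    have hn1 : 1 ≤ n := (Finset.mem_Icc.mp hn).1
    have hn0 : (n : ℝ) ≠ 0 := Nat.cast_ne_zero.mpr (by omega)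
    have hne : n ≠ 0 := by omega
    simp only [hgdef, gHH, hne, if_false, Nat.add_zero, Nat.choose_zero_right,
      Nat.cast_one, mul_one]
    rw [zpow_add_one₀ hn0, mul_inv, ← div_eq_mul_inv]
  | succ q ih =>
    have he : (fun N : ℕ => Fps (p : ℤ) (q + 1) N)
        = fun N : ℕ => Fps (p : ℤ) q N
          - gHH (p : ℤ) (q + 1) N / (((q : ℝ) + 1) * (((N + q + 1).choose (q + 1) : ℕ) : ℝ)) := by
      funext N
      have := F_rec (p : ℤ) q N
      linarith [this]
    rw [he]
    have hp' : (1 : ℤ) ≤ (p : ℤ) := by exact_mod_cast hp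
    simpa using ih.sub (tendsto_rem hp' q)

/-- The case `l = q`, `m = 0`: the sum equals `ζ(p+1)`, independently of `q`. -/
theorem stmt_7 (p q : ℕ) (hp : 1 ≤ p) :
    ∑' n : ℕ+, gHH p q n / ((n : ℝ) * ((((n : ℕ) + q).choose q : ℕ) : ℝ))
      = zv ((p : ℤ) + 1) := by
  classical
  have := Filter.atTop_neBot (α := ℕ)
  set g : ℕ → ℝ := fun n => gHH (p : ℤ) q n / ((n : ℝ) * (((n + q).choose q : ℕ) : ℝ))
    with hgdef
  have hg0 : g 0 = 0 := by simp [hgdef, gHH_zero']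
  have hnn : ∀ n, 0 ≤ g n := fun n => div_nonneg (gHH_nonneg _ q n) (by positivity)
  have ht : Filter.Tendsto (fun N : ℕ => ∑ i ∈ Finset.range N, g i) Filter.atTop
      (nhds (zv ((p : ℤ) + 1))) := by
    refine (Filter.tendsto_add_atTop_iff_nat 1).mp ?_
    have := tendsto_Fps p hp q
    refine this.congr fun N => ?_
    rw [sum_range_eq_Icc hg0 N]
    rfl
  have hgz : HasSum g (zv ((p : ℤ) + 1)) :=
    (hasSum_iff_tendsto_nat_of_nonneg hnn _).mpr ht
  have hinj : Function.Injective (fun n : ℕ+ => (n : ℕ)) := PNat.coe_injective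
  have hrange : ∀ x ∉ Set.range (fun n : ℕ+ => (n : ℕ)), g x = 0 := by
    intro x hx
    have hx0 : x = 0 := by
      by_contra h
      exact hx ⟨⟨x, Nat.pos_of_ne_zero h⟩, rfl⟩
    rw [hx0]; exact hg0
  have : HasSum (fun n : ℕ+ => g n) (zv ((p : ℤ) + 1)) := (hinj.hasSum_iff hrange).mpr hgz
  exact this.tsum_eq
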